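/- arXiv:2301.11308 — 2 statements merged into one kernel-verified Lean document; each statement's English description precedes it below -/
import Mathlib

section
/- Let X be an h×h invertible real matrix, Y an m×h real matrix, H an h×m real matrix, and P an m×m real symmetric matrix (Pᵀ = P). If X·Yᵀ = H·P, then Y·X⁻¹ = P·Hᵀ·(X·Xᵀ)⁻¹. In particular, writing S = X·Xᵀ, the matrix K = Y·X⁻¹ equals the Kalman gain P·Hᵀ·S⁻¹. -/
open Matrix

/-- In the square-root Kalman update, if `X·Yᵀ = H·P` with `X` invertible and `P`
symmetric, then `K = Y·X⁻¹` equals the Kalman gain `P·Hᵀ·(X·Xᵀ)⁻¹ = P·Hᵀ·S⁻¹`. -/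
theorem kalman_gain_from_sqrt_factors {h m : ℕ}
    (X : Matrix (Fin h) (Fin h) ℝ)
    (Y : Matrix (Fin m) (Fin h) ℝ)
    (H : Matrix (Fin h) (Fin m) ℝ)
    (P : Matrix (Fin m) (Fin m) ℝ)
    (hX : IsUnit X)
    (hP : Pᵀ = P)
    (hXY : X * Yᵀ = H * P) :
    Y * X⁻¹ = P * Hᵀ * (X * Xᵀ)⁻¹ := by
  have hXT : IsUnit Xᵀ := by
    rw [Matrix.isUnit_iff_isUnit_det, Matrix.det_transpose,
      ← Matrix.isUnit_iff_isUnit_det]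
    exact hX
  have hY : Y = P * Hᵀ * (Xᵀ)⁻¹ := by
    have := congrArg Matrix.transpose hXY
    rw [Matrix.transpose_mul, Matrix.transpose_mul, hP, Matrix.transpose_transpose] at this
    rw [← this, Matrix.mul_assoc,
      Matrix.mul_nonsing_inv _ ((Matrix.isUnit_iff_isUnit_det _).mp hXT),
      Matrix.mul_one]
  rw [hY, Matrix.mul_inv_rev, Matrix.mul_assoc]
end

section
/- Let X be an h×h invertible real matrix, Y an m×h real matrix, Z an m×m real matrix, H an h×m real matrix, and P an m×m real symmetric matrix (Pᵀ = P). Suppose X·Yᵀ = H·P and Y·Yᵀ + Z·Zᵀ = P. Then Z·Zᵀ = P − P·Hᵀ·(X·Xᵀ)⁻¹·H·P. In particular, writing S = X·Xᵀ and K = Y·X⁻¹, one has Z·Zᵀ = P − K·S·Kᵀ, so Z is a square root factor of the Kalman-updated covariance matrix. -/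
open Matrix

/-- In the square-root Kalman update, if `X·Yᵀ = H·P` and `Y·Yᵀ + Z·Zᵀ = P` with `X`
invertible and `P` symmetric, then `Z·Zᵀ = P − P·Hᵀ·(X·Xᵀ)⁻¹·H·P`; in particular,
with `S = X·Xᵀ` and `K = Y·X⁻¹`, `Z·Zᵀ = P − K·S·Kᵀ`, so `Z` is a square root factor
of the Kalman-updated covariance. -/
theorem sqrt_factor_of_updated_covariance {h m : ℕ}
    (X : Matrix (Fin h) (Fin h) ℝ)
    (Y : Matrix (Fin m) (Fin h) ℝ)
    (Z : Matrix (Fin m) (Fin m) ℝ)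
    (H : Matrix (Fin h) (Fin m) ℝ)
    (P : Matrix (Fin m) (Fin m) ℝ)
    (hX : IsUnit X)
    (hP : Pᵀ = P)
    (hXY : X * Yᵀ = H * P)
    (hYZ : Y * Yᵀ + Z * Zᵀ = P) :
    Z * Zᵀ = P - P * Hᵀ * (X * Xᵀ)⁻¹ * H * P ∧
    Z * Zᵀ = P - (Y * X⁻¹) * (X * Xᵀ) * (Y * X⁻¹)ᵀ := by
  have hXi : Invertible X := hX.invertible
  have hYT : Yᵀ = X⁻¹ * (H * P) := by
    rw [← hXY, ← Matrix.mul_assoc, Matrix.nonsing_inv_mul X (isUnit_iff_isUnit_det X |>.mp hX), Matrix.one_mul]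
  have hY : Y = P * Hᵀ * (X⁻¹)ᵀ := by
    calc Y = Yᵀᵀ := (transpose_transpose Y).symm
    _ = (X⁻¹ * (H * P))ᵀ := by rw [hYT]
    _ = P * Hᵀ * (X⁻¹)ᵀ := by
        rw [transpose_mul, transpose_mul, hP, Matrix.mul_assoc]
  have hYY : Y * Yᵀ = P * Hᵀ * (X * Xᵀ)⁻¹ * H * P := by
    rw [hYT, hY, Matrix.mul_inv_rev, transpose_nonsing_inv]
    simp only [Matrix.mul_assoc]
  have h1 : Z * Zᵀ = P - P * Hᵀ * (X * Xᵀ)⁻¹ * H * P := by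
    rw [← hYY]; linear_combination (norm := noncomm_ring) hYZ
  refine ⟨h1, ?_⟩
  have hKK : (Y * X⁻¹) * (X * Xᵀ) * (Y * X⁻¹)ᵀ = Y * Yᵀ := by
    rw [transpose_mul, transpose_nonsing_inv]
    calc Y * X⁻¹ * (X * Xᵀ) * ((Xᵀ)⁻¹ * Yᵀ)
        = Y * (X⁻¹ * X) * (Xᵀ * (Xᵀ)⁻¹) * Yᵀ := by
          simp only [Matrix.mul_assoc]
      _ = Y * Yᵀ := by
          rw [Matrix.nonsing_inv_mul X (isUnit_iff_isUnit_det X |>.mp hX),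
            Matrix.mul_nonsing_inv Xᵀ (by simpa using (isUnit_iff_isUnit_det X |>.mp hX)),
            Matrix.mul_one, Matrix.mul_one]
  rw [hKK]
  linear_combination (norm := noncomm_ring) hYZ
end
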